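/- Let A be a unital C*-algebra, L a partially-defined L-seminorm, and for each maximal commutative unital C*-subalgebra A_α define Diam(S(A_α)) := sup of d_{L,α} over pairs of states of A_α. Then sup_α Diam(S(A_α)) = Diam(S(A)) := sup of d_L over pairs of states of A, where d_L(μ,ν) = sup{ |μ(f) − ν(f)| : f ∈ A^{sa}, L(f) ≤ 1 }. -/

import Mathlib

open scoped ComplexOrder NNReal ENNReal

/-- A commutative unital C*-subalgebra: a closed star-subalgebra with commutative
multiplication. -/
def IsCommClosedStarSubalg {A : Type*} [NormedRing A] [StarRing A]
    [NormedAlgebra ℂ A] [StarModule ℂ A] (S : StarSubalgebra ℂ A) : Prop :=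
  IsClosed (S : Set A) ∧ ∀ x ∈ S, ∀ y ∈ S, x * y = y * x

/-- A maximal commutative unital C*-subalgebra. -/
def IsMaxCommClosedStarSubalg {A : Type*} [NormedRing A] [StarRing A]
    [NormedAlgebra ℂ A] [StarModule ℂ A] (S : StarSubalgebra ℂ A) : Prop :=
  IsCommClosedStarSubalg S ∧
    ∀ S' : StarSubalgebra ℂ A, IsCommClosedStarSubalg S' → S ≤ S' → S' = S

/-- A state on the unital C*-subalgebra `S`, regarded as a `ℂ`-valued function on `A`
(only its values on `S` matter): linear on `S`, positive on `S`, and unital. -/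
def IsStateOn {A : Type*} [NormedRing A] [StarRing A] [CStarRing A]
    [NormedAlgebra ℂ A] [StarModule ℂ A] (S : StarSubalgebra ℂ A) (φ : A → ℂ) : Prop :=
  (∀ x ∈ S, ∀ y ∈ S, φ (x + y) = φ x + φ y) ∧
  (∀ c : ℂ, ∀ x ∈ S, φ (c • x) = c * φ x) ∧
  (∀ x ∈ S, 0 ≤ φ (star x * x)) ∧ φ 1 = 1

/-- The spectral distance relative to a star-subalgebra `S`:
`d_{L,S}(μ,ν) = sup { |μ f − ν f| : f ∈ S self-adjoint, L f ≤ 1 }`. -/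
noncomputable def spectralDistOn {A : Type*} [NormedRing A] [StarRing A]
    [NormedAlgebra ℂ A] [StarModule ℂ A] (L : A → ℝ≥0∞) (S : StarSubalgebra ℂ A)
    (μ ν : A → ℂ) : ℝ≥0∞ :=
  ⨆ f : {f : A // f ∈ S ∧ IsSelfAdjoint f ∧ L f ≤ 1}, (‖μ f.1 - ν f.1‖₊ : ℝ≥0∞)

/-!
A state `φ` on a closed unital star-subalgebra `S` is a positive functional on the C⋆-algebra `S`,
so Cauchy–Schwarz in its GNS space gives `‖φ x‖ ≤ ‖φ 1‖ ‖x‖ = ‖x‖`. Hahn–Banach extends `φ` to a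
functional `g` on `A` with `‖g‖ ≤ 1` and `g 1 = 1`, and such a `g` is again a state: for
self-adjoint `a` and real `t`, `‖a + t i‖² = ‖a² + t²‖ ≤ ‖a‖² + t²` forces `g a` to be real, and for
`b ≥ 0`, `‖‖b‖ - b‖ ≤ ‖b‖` forces `g b ≥ 0`. Hence pairs of states of a maximal commutative `S`
extend to pairs of states of `A` with the same `d_{L,S}`, and `d_{L,S} ≤ d_L`. Conversely, by Zorn
every self-adjoint `f` lies in a maximal commutative star-subalgebra, which is closed since the
closure of a commutative star-subalgebra is commutative; so every term of `d_L(μ, ν)` already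
appears in `d_{L,S}` of the restrictions of `μ` and `ν`.
-/

section Restriction

variable {A : Type*} [NormedRing A] [StarRing A] [NormedAlgebra ℂ A] [StarModule ℂ A]

theorem IsStateOn.mono [CStarRing A] {S T : StarSubalgebra ℂ A} (hST : S ≤ T) {φ : A → ℂ}
    (hφ : IsStateOn T φ) : IsStateOn S φ :=
  ⟨fun x hx y hy => hφ.1 x (hST hx) y (hST hy), fun c x hx => hφ.2.1 c x (hST hx),
    fun x hx => hφ.2.2.1 x (hST hx), hφ.2.2.2⟩

def IsStateOn.toLinearMap [CStarRing A] {S : StarSubalgebra ℂ A} {φ : A → ℂ}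
    (hφ : IsStateOn S φ) : S →ₗ[ℂ] ℂ where
  toFun z := φ z
  map_add' a b := hφ.1 a a.2 b b.2
  map_smul' c a := hφ.2.1 c a a.2

theorem nnnorm_sub_le_spectralDistOn {L : A → ℝ≥0∞} {S : StarSubalgebra ℂ A} {f : A}
    (hfS : f ∈ S) (hf : IsSelfAdjoint f) (hLf : L f ≤ 1) (μ ν : A → ℂ) :
    (‖μ f - ν f‖₊ : ℝ≥0∞) ≤ spectralDistOn L S μ ν :=
  le_iSup (fun f : {f : A // f ∈ S ∧ IsSelfAdjoint f ∧ L f ≤ 1} => (‖μ f.1 - ν f.1‖₊ : ℝ≥0∞))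
    ⟨f, hfS, hf, hLf⟩

theorem spectralDistOn_congr (L : A → ℝ≥0∞) {S : StarSubalgebra ℂ A} {μ μ' ν ν' : A → ℂ}
    (hμ : Set.EqOn μ μ' S) (hν : Set.EqOn ν ν' S) :
    spectralDistOn L S μ ν = spectralDistOn L S μ' ν' := by
  refine iSup_congr fun f => ?_
  rw [hμ f.2.1, hν f.2.1]

theorem spectralDistOn_mono (L : A → ℝ≥0∞) {S T : StarSubalgebra ℂ A} (hST : S ≤ T)
    (μ ν : A → ℂ) : spectralDistOn L S μ ν ≤ spectralDistOn L T μ ν :=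
  iSup_le fun f => nnnorm_sub_le_spectralDistOn (hST f.2.1) f.2.2.1 f.2.2.2 μ ν

end Restriction

section MaximalCommutative

theorem StarSubalgebra.isMulCommutative_topologicalClosure {R A : Type*} [CommRing R]
    [StarRing R] [TopologicalSpace A] [Ring A] [Algebra R A] [StarRing A] [StarModule R A]
    [IsSemitopologicalRing A] [ContinuousStar A] [T2Space A] (S : StarSubalgebra R A)
    [IsMulCommutative S] : IsMulCommutative S.topologicalClosure :=
  letI := S.commRingTopologicalClosure (isMulCommutative_iff.1 ‹_›)
  ⟨⟨mul_comm⟩⟩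

variable {A : Type*} [NormedRing A] [StarRing A] [NormedAlgebra ℂ A] [StarModule ℂ A]

theorem isCommClosedStarSubalg_iff {S : StarSubalgebra ℂ A} :
    IsCommClosedStarSubalg S ↔ IsClosed (S : Set A) ∧ IsMulCommutative S := by
  rw [isMulCommutative_iff_of_setLike]; rfl

theorem exists_isMaxCommClosedStarSubalg_mem [ContinuousStar A] (a : A) [IsStarNormal a] :
    ∃ S : StarSubalgebra ℂ A, IsMaxCommClosedStarSubalg S ∧ a ∈ S := by
  obtain ⟨M, haM, hM⟩ := zorn_le_nonempty₀ {S : StarSubalgebra ℂ A | IsMulCommutative S}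
    (fun c hc hchain S hS => by
      have : Nonempty c := ⟨⟨S, hS⟩⟩
      have (T : c) : IsMulCommutative T.1 := hc T.2
      exact ⟨⨆ T : c, T.1, StarSubalgebra.isMulCommutative_iSup hchain.directed,
        fun T hT => le_iSup (fun T : c => T.1) ⟨T, hT⟩⟩)
    (StarAlgebra.adjoin ℂ {a}) (StarAlgebra.isMulCommutative_adjoin_singleton ℂ a)
  have : IsMulCommutative M := hM.prop
  have hclosed : IsClosed (M : Set A) := by
    have := hM.le_of_ge M.isMulCommutative_topologicalClosure M.le_topologicalClosure
    exact le_antisymm this M.le_topologicalClosure ▸ M.isClosed_topologicalClosure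
  refine ⟨M, ⟨isCommClosedStarSubalg_iff.2 ⟨hclosed, hM.prop⟩, fun S hS hMS => ?_⟩,
    haM (StarAlgebra.self_mem_adjoin_singleton ℂ a)⟩
  exact le_antisymm (hM.le_of_ge (isCommClosedStarSubalg_iff.1 hS).2 hMS) hMS

end MaximalCommutative

namespace PositiveLinearMap

variable {B : Type*} [CStarAlgebra B] [PartialOrder B] [StarOrderedRing B]

theorem norm_preGNS_sq (f : B →ₚ[ℂ] ℂ) (a : f.PreGNS) :
    ‖a‖ ^ 2 = ‖f (star (f.ofPreGNS a) * f.ofPreGNS a)‖ := by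
  rw [← preGNS_norm_sq, Complex.norm_pow, Complex.norm_real, Real.norm_of_nonneg (norm_nonneg a)]

theorem norm_apply_le (f : B →ₚ[ℂ] ℂ) (x : B) : ‖f x‖ ≤ ‖f 1‖ * ‖x‖ := by
  have cauchy_schwarz : ‖f x‖ ≤ ‖f.toPreGNS 1‖ * ‖f.toPreGNS x‖ := by
    simpa [preGNS_inner_def] using norm_inner_le_norm (𝕜 := ℂ) (f.toPreGNS 1) (f.toPreGNS x)
  have h_one : ‖f.toPreGNS 1‖ ^ 2 = ‖f 1‖ := by simp [norm_preGNS_sq]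
  have h_x : ‖f.toPreGNS x‖ ^ 2 ≤ ‖f 1‖ * ‖x‖ ^ 2 := by
    rw [norm_preGNS_sq, ofPreGNS_toPreGNS, sq ‖x‖, ← CStarRing.norm_star_mul_self]
    exact f.norm_apply_le_of_nonneg _ (star_mul_self_nonneg x)
  have h_sq : ‖f x‖ ^ 2 ≤ (‖f 1‖ * ‖x‖) ^ 2 :=
    calc ‖f x‖ ^ 2 ≤ ‖f.toPreGNS 1‖ ^ 2 * ‖f.toPreGNS x‖ ^ 2 := by
          rw [← mul_pow]; gcongr
      _ ≤ (‖f 1‖ * ‖x‖) ^ 2 := by rw [h_one, mul_pow, sq ‖f 1‖, mul_assoc]; gcongr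
  exact (pow_le_pow_iff_left₀ (norm_nonneg _) (by positivity) two_ne_zero).1 h_sq

end PositiveLinearMap

section States

variable {A : Type*} [CStarAlgebra A]

theorem IsStateOn.norm_apply_le {S : StarSubalgebra ℂ A} (hS : IsClosed (S : Set A))
    {φ : A → ℂ} (hφ : IsStateOn S φ) {x : A} (hx : x ∈ S) : ‖φ x‖ ≤ ‖x‖ := by
  have : IsClosed (S : Set A) := hS
  let := CStarAlgebra.spectralOrder S
  have := CStarAlgebra.spectralOrderedRing S
  let f : S →ₚ[ℂ] ℂ := .mk₀ hφ.toLinearMap fun z hz => by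
    obtain ⟨w, rfl⟩ := CStarAlgebra.nonneg_iff_eq_star_mul_self.1 hz
    exact hφ.2.2.1 w w.2
  have hf (z : S) : f z = φ z := rfl
  simpa [hf, hφ.2.2.2] using f.norm_apply_le ⟨x, hx⟩

theorem IsSelfAdjoint.star_add_smul_one_mul {a : A} (ha : IsSelfAdjoint a) (t : ℝ) :
    star (a + (t * Complex.I) • (1 : A)) * (a + (t * Complex.I) • 1)
      = a * a + ((t ^ 2 : ℝ) : ℂ) • 1 := by
  have hconj : star (t * Complex.I) = -(t * Complex.I) := by
    simp [Complex.conj_ofReal]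
  rw [star_add, star_smul, ha.star_eq, star_one, hconj]
  simp only [add_mul, mul_add, smul_mul_assoc, mul_smul_comm, one_mul, mul_one]
  have : (t * Complex.I) * -(t * Complex.I) = ((t ^ 2 : ℝ) : ℂ) := by
    push_cast; linear_combination (-(t : ℂ) ^ 2) * Complex.I_mul_I
  rw [smul_add, smul_smul, this]
  module

theorem StrongDual.im_apply_eq_zero_of_isSelfAdjoint {g : StrongDual ℂ A} (hg : ‖g‖ ≤ 1)
    (hg1 : g 1 = 1) {a : A} (ha : IsSelfAdjoint a) : (g a).im = 0 := by
  have : Nontrivial A := nontrivial_of_ne 1 0 fun h => by simp [h] at hg1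
  have h_bound (t : ℝ) : (g a).im ^ 2 + 2 * t * (g a).im ≤ ‖a‖ ^ 2 := by
    set u := a + (t * Complex.I) • (1 : A)
    have hu : ‖u‖ ^ 2 ≤ ‖a‖ ^ 2 + t ^ 2 :=
      calc ‖u‖ ^ 2 = ‖a * a + ((t ^ 2 : ℝ) : ℂ) • (1 : A)‖ := by
            rw [← ha.star_add_smul_one_mul, CStarRing.norm_star_mul_self, sq]
        _ ≤ ‖a‖ * ‖a‖ + t ^ 2 := by
            refine (norm_add_le _ _).trans (add_le_add (norm_mul_le a a) ?_)
            simp [norm_smul]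
        _ = ‖a‖ ^ 2 + t ^ 2 := by ring
    have hgu : ‖g a + t * Complex.I‖ ≤ ‖u‖ := by
      simpa [u, hg1] using g.le_of_opNorm_le hg u
    have := (pow_le_pow_left₀ (norm_nonneg _) hgu 2).trans hu
    rw [Complex.sq_norm, Complex.normSq_apply] at this
    simp only [Complex.add_re, Complex.add_im, Complex.mul_re, Complex.mul_im, Complex.ofReal_re,
      Complex.ofReal_im, Complex.I_re, Complex.I_im] at this
    nlinarith [sq_nonneg (g a).re]
  by_contra h_ne
  have := h_bound ((‖a‖ ^ 2 + 1) / (2 * (g a).im))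
  rw [show 2 * ((‖a‖ ^ 2 + 1) / (2 * (g a).im)) * (g a).im = ‖a‖ ^ 2 + 1 by field_simp] at this
  nlinarith [sq_nonneg (g a).im]

theorem StrongDual.apply_nonneg_of_nonneg [PartialOrder A] [StarOrderedRing A]
    {g : StrongDual ℂ A} (hg : ‖g‖ ≤ 1) (hg1 : g 1 = 1) {b : A} (hb : 0 ≤ b) : 0 ≤ g b := by
  have : Nontrivial A := nontrivial_of_ne 1 0 fun h => by simp [h] at hg1
  have h_im := StrongDual.im_apply_eq_zero_of_isSelfAdjoint hg hg1 (IsSelfAdjoint.of_nonneg hb)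
  have hc : ‖algebraMap ℝ A ‖b‖ - b‖ ≤ ‖b‖ := by
    simpa using CStarAlgebra.norm_le_norm_of_nonneg_of_le
      (sub_nonneg.2 (IsSelfAdjoint.of_nonneg hb).le_algebraMap_norm_self) (sub_le_self _ hb)
  have hgc : ‖(‖b‖ : ℂ) - g b‖ ≤ ‖b‖ := by
    have h := (g.le_of_opNorm_le_of_le hg le_rfl).trans ((one_mul _).trans_le hc)
    rwa [map_sub, Algebra.algebraMap_eq_smul_one, g.map_smul_of_tower, hg1, Complex.real_smul,
      mul_one] at h
  have h_re := (Complex.abs_re_le_norm _).trans hgc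
  rw [Complex.sub_re, Complex.ofReal_re, abs_le] at h_re
  exact Complex.nonneg_iff.2 ⟨by linarith [h_re.2], h_im.symm⟩

theorem StrongDual.isStateOn_top {g : StrongDual ℂ A} (hg : ‖g‖ ≤ 1) (hg1 : g 1 = 1) :
    IsStateOn ⊤ g := by
  let := CStarAlgebra.spectralOrder A
  have := CStarAlgebra.spectralOrderedRing A
  exact ⟨fun x _ y _ => map_add g x y, fun c x _ => map_smul g c x,
    fun x _ => StrongDual.apply_nonneg_of_nonneg hg hg1 (star_mul_self_nonneg x), hg1⟩

theorem IsStateOn.exists_isStateOn_top_eqOn {S : StarSubalgebra ℂ A}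
    (hS : IsClosed (S : Set A)) {φ : A → ℂ} (hφ : IsStateOn S φ) :
    ∃ μ : A → ℂ, IsStateOn ⊤ μ ∧ Set.EqOn μ φ S := by
  let ℓ : StrongDual ℂ (Subalgebra.toSubmodule S.toSubalgebra) :=
    hφ.toLinearMap.mkContinuous 1 fun z => (one_mul ‖z‖).symm ▸ hφ.norm_apply_le hS z.2
  obtain ⟨g, hgℓ, hg_norm⟩ := exists_extension_norm_eq _ ℓ
  have hg : ‖g‖ ≤ 1 := hg_norm ▸ LinearMap.mkContinuous_norm_le _ zero_le_one _
  have hg1 : g 1 = 1 := (hgℓ ⟨1, one_mem S⟩).trans hφ.2.2.2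
  exact ⟨g, StrongDual.isStateOn_top hg hg1, fun x hx => hgℓ ⟨x, hx⟩⟩

end States

theorem stmt18_general
    (A : Type*) [NormedRing A] [StarRing A] [CStarRing A]
    [NormedAlgebra ℂ A] [StarModule ℂ A] [CompleteSpace A]
    (L : A → ℝ≥0∞) :
    (⨆ S : {S : StarSubalgebra ℂ A // IsMaxCommClosedStarSubalg S},
      ⨆ φ : {φ : A → ℂ // IsStateOn S.1 φ}, ⨆ ψ : {ψ : A → ℂ // IsStateOn S.1 ψ},
        spectralDistOn L S.1 φ.1 ψ.1) =
    (⨆ μ : {μ : A → ℂ // IsStateOn ⊤ μ}, ⨆ ν : {ν : A → ℂ // IsStateOn ⊤ ν},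
        spectralDistOn L ⊤ μ.1 ν.1) := by
  let : CStarAlgebra A := { ‹NormedRing A›, ‹StarRing A›, ‹CStarRing A›, ‹NormedAlgebra ℂ A›,
    ‹StarModule ℂ A›, ‹CompleteSpace A› with }
  apply le_antisymm
  · refine iSup_le fun S => iSup₂_le fun φ ψ => ?_
    obtain ⟨μ, hμ, hμφ⟩ := φ.2.exists_isStateOn_top_eqOn S.2.1.1
    obtain ⟨ν, hν, hνψ⟩ := ψ.2.exists_isStateOn_top_eqOn S.2.1.1
    calc spectralDistOn L S φ ψ = spectralDistOn L S μ ν :=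
          spectralDistOn_congr L hμφ.symm hνψ.symm
      _ ≤ spectralDistOn L ⊤ μ ν := spectralDistOn_mono L le_top μ ν
      _ ≤ _ := le_iSup₂_of_le (f := fun μ ν : {μ : A → ℂ // IsStateOn ⊤ μ} =>
          spectralDistOn L ⊤ μ.1 ν.1) ⟨μ, hμ⟩ ⟨ν, hν⟩ le_rfl
  · refine iSup₂_le fun μ ν => iSup_le fun f => ?_
    have := f.2.2.1.isStarNormal
    obtain ⟨S, hS, hfS⟩ := exists_isMaxCommClosedStarSubalg_mem f.1
    calc _ ≤ spectralDistOn L S μ ν := nnnorm_sub_le_spectralDistOn hfS f.2.2.1 f.2.2.2 μ ν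
      _ ≤ _ := le_iSup_of_le (⟨S, hS⟩ : {S : StarSubalgebra ℂ A // IsMaxCommClosedStarSubalg S})
          (le_iSup₂_of_le (f := fun φ ψ : {φ : A → ℂ // IsStateOn S φ} =>
            spectralDistOn L S φ.1 ψ.1) ⟨μ, μ.2.mono le_top⟩ ⟨ν, ν.2.mono le_top⟩ le_rfl)

/-- For a partially-defined L-seminorm `L` on a unital C*-algebra `A`, the
supremum over all maximal commutative unital C*-subalgebras `S` of the `d_{L,S}`-diameters of
their state spaces equals the `d_L`-diameter of the state space of `A`. -/
theorem stmt18
    (A : Type*) [NormedRing A] [StarRing A] [CStarRing A]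
    [NormedAlgebra ℂ A] [StarModule ℂ A] [CompleteSpace A]
    (L : A → ℝ≥0∞)
    (hhom : ∀ (t : ℝ) (f : A), IsSelfAdjoint f → L (t • f) = (‖t‖₊ : ℝ≥0∞) * L f)
    (hsub : ∀ f g : A, IsSelfAdjoint f → IsSelfAdjoint g → L (f + g) ≤ L f + L g)
    (hone : L 1 = 0) :
    (⨆ S : {S : StarSubalgebra ℂ A // IsMaxCommClosedStarSubalg S},
      ⨆ φ : {φ : A → ℂ // IsStateOn S.1 φ}, ⨆ ψ : {ψ : A → ℂ // IsStateOn S.1 ψ},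
        spectralDistOn L S.1 φ.1 ψ.1) =
    (⨆ μ : {μ : A → ℂ // IsStateOn ⊤ μ}, ⨆ ν : {ν : A → ℂ // IsStateOn ⊤ ν},
        spectralDistOn L ⊤ μ.1 ν.1) :=
  stmt18_general A L
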